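/- Let N = 2ⁿ and let σ ∈ S_N be a uniformly random butterfly permutation (corresponding to ⊗_{j=1}^n Pᵉʲ with the e_j iid Bernoulli(1/2)). Writing σ in the canonical form (N-1, i_{N-1}) ⋯ (1, i_1), the number of indices k with i_k > k equals 0 when σ is the identity and N/2 otherwise; hence this count is distributed as (N/2)·Bernoulli(1 − 1/N). -/

import Mathlib

/-- The permutation `(N-1, i_{N-1}) ⋯ (1, i_1)(0, i_0)` (0-indexed), where the
transposition with index `0` is applied first. -/
def pivotProd (n : ℕ) (i : Fin n → Fin n) : Equiv.Perm (Fin n) :=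
  ((List.ofFn fun k : Fin n => Equiv.swap k (i k)).reverse).prod

instance instNeZeroTwoPow (n : ℕ) : NeZero (2 ^ n) := ⟨(pow_pos (by norm_num) n).ne'⟩

/-!
The canonical decomposition is unique: the factors `(j, i_j)` with `j > k` fix `k`, so `i_k` is
recovered from `σ` and the earlier pivots as `i_k = (k-1, i_{k-1}) ⋯ (0, i_0) (σ⁻¹ k)`.
An involution `σ` is the product of its disjoint transpositions `(k, σ k)`, `k < σ k`, so its pivots
are `i_k = max k (σ k)`, and `i_k > k` exactly at the smaller point of each 2-cycle. The butterfly
permutation `x ↦ x xor e` is an involution without fixed points unless `e = 0`, hence has `N/2`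
such points, and `e ≠ 0` has probability `1 - 1/N`.
-/

section Pivot

variable {N : ℕ}

def pivotPrefix (i : Fin N → Fin N) (m : ℕ) : Equiv.Perm (Fin N) :=
  (((List.ofFn fun k : Fin N => Equiv.swap k (i k)).take m).reverse).prod

def pivotSuffix (i : Fin N → Fin N) (m : ℕ) : Equiv.Perm (Fin N) :=
  (((List.ofFn fun k : Fin N => Equiv.swap k (i k)).drop m).reverse).prod

lemma pivotProd_eq_suffix_mul_prefix (i : Fin N → Fin N) (m : ℕ) :
    pivotProd N i = pivotSuffix i m * pivotPrefix i m := by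
  rw [pivotProd, pivotSuffix, pivotPrefix, ← List.prod_append, ← List.reverse_append,
    List.take_append_drop]

lemma pivotProd_eq_pivotPrefix (i : Fin N → Fin N) : pivotProd N i = pivotPrefix i N := by
  rw [pivotProd, pivotPrefix, List.take_of_length_le (by simp)]

lemma pivotPrefix_zero (i : Fin N → Fin N) : pivotPrefix i 0 = 1 := by
  simp [pivotPrefix]

lemma pivotPrefix_succ (i : Fin N → Fin N) (k : Fin N) :
    pivotPrefix i (k + 1) = Equiv.swap k (i k) * pivotPrefix i k := by
  simp [pivotPrefix, List.take_add_one, List.getElem_ofFn]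

lemma pivotPrefix_congr {i j : Fin N → Fin N} {m : ℕ} (h : ∀ k : Fin N, (k : ℕ) < m → i k = j k) :
    pivotPrefix i m = pivotPrefix j m := by
  unfold pivotPrefix
  congr 2
  refine List.ext_getElem (by simp) fun t ht _ => ?_
  simp only [List.length_take, List.length_ofFn, lt_min_iff] at ht
  simp [h ⟨t, ht.2⟩ ht.1]

lemma pivotSuffix_succ_apply_self {i : Fin N → Fin N} (hi : ∀ k, k ≤ i k) (k : Fin N) :
    pivotSuffix i (k + 1) k = k := by
  refine (MulAction.stabilizer (Equiv.Perm (Fin N)) k).list_prod_mem fun g hg => ?_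
  obtain ⟨t, ht, rfl⟩ := List.mem_drop_iff_getElem.1 (List.mem_reverse.1 hg)
  simp only [List.length_ofFn] at ht
  have hkt : k < ⟨k + 1 + t, by omega⟩ := Fin.mk_lt_mk.2 (by omega)
  simp only [List.getElem_ofFn, MulAction.mem_stabilizer_iff, Equiv.Perm.smul_def]
  exact Equiv.swap_apply_of_ne_of_ne hkt.ne (hkt.trans_le (hi _)).ne

/-- `σ = (later factors) * (k, i k) * (first k factors)` and the later factors fix `k`. -/
lemma inv_pivotProd_apply {i : Fin N → Fin N} (hi : ∀ k, k ≤ i k) (k : Fin N) :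
    (pivotProd N i)⁻¹ k = (pivotPrefix i k)⁻¹ (i k) := by
  rw [Equiv.Perm.inv_eq_iff_eq, pivotProd_eq_suffix_mul_prefix i (k + 1), pivotPrefix_succ]
  simp [pivotSuffix_succ_apply_self hi]

lemma pivotProd_injOn : Set.InjOn (pivotProd N) {i | ∀ k, k ≤ i k} := by
  intro i hi j hj hij
  funext k
  induction k using WellFoundedLT.induction with
  | _ k ih =>
    have hpre : pivotPrefix i k = pivotPrefix j k := pivotPrefix_congr ih
    have := inv_pivotProd_apply hi k
    rw [hij, inv_pivotProd_apply hj, hpre] at this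
    exact ((pivotPrefix j k)⁻¹.injective this).symm

end Pivot

open Finset

section Involution

variable {N : ℕ}

/-- The first `m` factors apply exactly the 2-cycles of `σ` whose smaller point is below `m`. -/
lemma pivotPrefix_max_apply {σ : Equiv.Perm (Fin N)} (hσ : Function.Involutive σ) {m : ℕ}
    (hm : m ≤ N) (x : Fin N) :
    pivotPrefix (fun k => max k (σ k)) m x = if (min x (σ x) : ℕ) < m then σ x else x := by
  induction m with
  | zero => simp [pivotPrefix_zero]
  | succ m ih =>
    have hk : m < N := hm
    rw [pivotPrefix_succ _ ⟨m, hk⟩, Equiv.Perm.mul_apply, ih hk.le, Equiv.swap_apply_def]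
    have h1 := hσ x
    have h2 := hσ ⟨m, hk⟩
    split_ifs <;> grind

lemma pivotProd_max_of_involutive {σ : Equiv.Perm (Fin N)} (hσ : Function.Involutive σ) :
    pivotProd N (fun k => max k (σ k)) = σ := by
  refine Equiv.ext fun x => ?_
  rw [pivotProd_eq_pivotPrefix, pivotPrefix_max_apply hσ le_rfl,
    if_pos ((min_le_left _ _).trans_lt x.isLt)]

lemma card_filter_lt_apply_of_involutive {α : Type*} [Fintype α] [LinearOrder α] {f : α → α}
    (hf : Function.Involutive f) (hfix : ∀ x, f x ≠ x) :
    2 * #{x | x < f x} = Fintype.card α := by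
  have hswap : #{x | x < f x} = #{x | ¬ x < f x} := by
    refine card_bij' (fun x _ => f x) (fun x _ => f x) ?_ ?_ (fun x _ => hf x)
      (fun x _ => hf x)
    all_goals
      intro x hx
      have := hfix x
      simp only [mem_filter, mem_univ, true_and, hf x] at hx ⊢
      grind
  rw [two_mul]
  nth_rw 2 [hswap]
  rw [card_filter_add_card_filter_not, card_univ]

end Involution

lemma PMF.map_decide_ne_uniformOfFintype {α : Type*} [Fintype α] [Nonempty α] [DecidableEq α]
    (a : α) :
    (PMF.uniformOfFintype α).map (fun x => decide (x ≠ a))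
      = PMF.bernoulli (1 - (Fintype.card α : NNReal)⁻¹) tsub_le_self := by
  have hcard : (1 : ENNReal) ≤ Fintype.card α := Nat.one_le_cast.2 Fintype.card_pos
  ext b
  rw [PMF.map_apply, PMF.bernoulli_apply, tsum_fintype]
  cases b
  · simp [ENNReal.sub_sub_cancel ENNReal.one_ne_top (ENNReal.inv_le_one.2 hcard)]
  · have hne : (Fintype.card α : ENNReal) ≠ 0 := (zero_lt_one.trans_le hcard).ne'
    have hmul : ((Fintype.card α : ENNReal) - 1) * (Fintype.card α : ENNReal)⁻¹
        = 1 - (Fintype.card α : ENNReal)⁻¹ := by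
      rw [ENNReal.sub_mul fun _ _ => ENNReal.inv_ne_top.2 hne,
        ENNReal.mul_inv_cancel hne (ENNReal.natCast_ne_top _), one_mul]
    simp [sum_ite, filter_ne', hmul]

section Butterfly

variable {n : ℕ} {σ : Fin (2 ^ n) → Equiv.Perm (Fin (2 ^ n))}

lemma butterfly_involutive (hσ : ∀ e x : Fin (2 ^ n), ((σ e) x : ℕ) = (x : ℕ) ^^^ (e : ℕ))
    (e : Fin (2 ^ n)) : Function.Involutive (σ e) :=
  fun x => Fin.ext (by rw [hσ, hσ, Nat.xor_xor_cancel_right])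

lemma butterfly_eq_one_iff (hσ : ∀ e x : Fin (2 ^ n), ((σ e) x : ℕ) = (x : ℕ) ^^^ (e : ℕ))
    (e : Fin (2 ^ n)) : σ e = 1 ↔ e = 0 := by
  constructor
  · intro h
    simpa [h] using (hσ e 0).symm
  · rintro rfl
    exact Equiv.ext fun x => Fin.ext (by simp [hσ])

lemma butterfly_apply_ne_self (hσ : ∀ e x : Fin (2 ^ n), ((σ e) x : ℕ) = (x : ℕ) ^^^ (e : ℕ))
    {e : Fin (2 ^ n)} (he : σ e ≠ 1) (x : Fin (2 ^ n)) : σ e x ≠ x := by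
  intro hx
  refine he ((butterfly_eq_one_iff hσ e).2 (Fin.ext ?_))
  have := congrArg (fun y : Fin (2 ^ n) => (x : ℕ) ^^^ (y : ℕ)) hx
  simpa [hσ] using this

end Butterfly

/-- Let `σ e` be the butterfly permutation of `{0, …, 2^n - 1}` given by bitwise
XOR with `e` (the permutation whose matrix is `⊗_j P^{e_j}`), and write each `σ e`
in the canonical form `(N-1, i_{N-1}) ⋯ (1, i_1)` with `k ≤ i_k`. Then the number
of indices `k` with `i_k > k` is `0` when `σ e = 1` and `N/2` otherwise; hence for
`e` uniform (i.e. the `e_j` iid Bernoulli(1/2)), this count is distributed as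
`(N/2)·Bernoulli(1 - 1/N)`. -/
theorem stmt16 (n : ℕ) (σ : Fin (2 ^ n) → Equiv.Perm (Fin (2 ^ n)))
    (hσ : ∀ e x : Fin (2 ^ n), ((σ e) x : ℕ) = (x : ℕ) ^^^ (e : ℕ))
    (i : Fin (2 ^ n) → Fin (2 ^ n) → Fin (2 ^ n))
    (hi : ∀ e, (∀ k, k ≤ i e k) ∧ pivotProd (2 ^ n) (i e) = σ e) :
    (∀ e, (Finset.univ.filter fun k => k < i e k).card
        = if σ e = 1 then 0 else 2 ^ n / 2) ∧
    (PMF.uniformOfFintype (Fin (2 ^ n))).map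
        (fun e => (Finset.univ.filter fun k => k < i e k).card)
      = (PMF.bernoulli (1 - ((2 : NNReal) ^ n)⁻¹) tsub_le_self).map
          (fun b => if b then 2 ^ n / 2 else 0) := by
  have hpivot : ∀ e, i e = fun k => max k (σ e k) := fun e =>
    pivotProd_injOn (hi e).1 (fun k => le_max_left k _)
      ((hi e).2.trans (pivotProd_max_of_involutive (butterfly_involutive hσ e)).symm)
  have hcount : ∀ e, #{k | k < i e k} = if σ e = 1 then 0 else 2 ^ n / 2 := by
    intro e
    simp only [hpivot e, lt_max_iff, lt_irrefl, false_or]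
    split_ifs with he
    · simp [he]
    · have := card_filter_lt_apply_of_involutive (butterfly_involutive hσ e)
        (butterfly_apply_ne_self hσ he)
      rw [Fintype.card_fin] at this
      omega
  refine ⟨hcount, ?_⟩
  have hcomp : (fun e => #{k | k < i e k})
      = (fun b => if b then 2 ^ n / 2 else 0) ∘ fun e : Fin (2 ^ n) => decide (e ≠ 0) := by
    funext e
    simp [hcount, butterfly_eq_one_iff hσ]
  rw [hcomp, ← PMF.map_comp, PMF.map_decide_ne_uniformOfFintype]
  simp
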